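/- For every f ∈ ℱ₁ and every ε > 0 there exists a polynomial p ∈ 𝒫′ with sup_{x∈[0,1]} |p(x) − f(x)| < ε; consequently the closure of 𝒫′_G in C([0,1]) with respect to the supremum norm equals ℱ₁. -/

import Mathlib

open Polynomial

/-- 𝒫′: real polynomials with p((0,1)) ⊆ (0,1), p < 0 on (-∞,0), p > 1 on (1,∞). -/
def memP' (p : Polynomial ℝ) : Prop :=
  (∀ x ∈ Set.Ioo (0:ℝ) 1, p.eval x ∈ Set.Ioo (0:ℝ) 1) ∧
  (∀ x : ℝ, x < 0 → p.eval x < 0) ∧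
  (∀ x : ℝ, 1 < x → 1 < p.eval x)

/-- 𝒫′_G: restrictions to [0,1] of polynomials in 𝒫′, as continuous maps. -/
def P'G : Set C(Set.Icc (0:ℝ) 1, ℝ) :=
  {g | ∃ p : Polynomial ℝ, memP' p ∧ g = p.toContinuousMapOn (Set.Icc (0:ℝ) 1)}

/-- ℱ₁ : continuous f : [0,1] → ℝ with f(0)=0, f(1)=1, 0 ≤ f ≤ 1. -/
def F1 : Set C(Set.Icc (0:ℝ) 1, ℝ) :=
  {f | f ⟨0, by norm_num⟩ = 0 ∧ f ⟨1, by norm_num⟩ = 1 ∧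
       ∀ x, f x ∈ Set.Icc (0:ℝ) 1}

/-!
Bernstein approximation maps `ℱ₁` into polynomials lying in `ℱ₁` (it is positive, reproduces
constants and interpolates the endpoints), so it suffices to approximate a polynomial `P` with
`P|[0,1] ∈ ℱ₁`. The mixture `q = (1 - η) P + η x` satisfies `q(0) = 0` and `q ≥ η x` on `[0,1]`,
so `q = x t` with `t ≥ η` on `[0,1)`. Adding `η x (x - 1) (2x - 1)^(2m+1)` changes `q` by at
most `η` on `[0,1]` and turns `t` into `t + η (x - 1) (2x - 1)^(2m+1)`, which stays positive on
`(0,1)` and, for large `m`, on `(-∞,0)`, where `(x - 1) (2x - 1)^(2m+1) ≥ (1 - x)^(2m+2)`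
outgrows `t`. The correction is odd about `1/2`, so the same argument applied to `1 - q(1 - x)`
handles the endpoint `1`.
-/

open Set Filter Topology unitInterval

namespace Polynomial

lemma exists_abs_eval_le_mul_pow (t : ℝ[X]) :
    ∃ C, ∀ x : ℝ, |t.eval x| ≤ C * (1 + |x|) ^ t.natDegree := by
  refine ⟨∑ i ∈ Finset.range (t.natDegree + 1), |t.coeff i|, fun x => ?_⟩
  rw [t.eval_eq_sum_range, Finset.sum_mul]
  refine (Finset.abs_sum_le_sum_abs _ _).trans (Finset.sum_le_sum fun i hi => ?_)
  rw [abs_mul, abs_pow]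
  have hx : |x| ≤ 1 + |x| := by linarith
  gcongr
  exact (pow_le_pow_left₀ (abs_nonneg x) hx i).trans
    (pow_le_pow_right₀ (by linarith [abs_nonneg x]) (Nat.lt_succ_iff.mp (Finset.mem_range.mp hi)))

lemma eventually_pos_add_mul_one_sub_pow {t : ℝ[X]} (ht : 0 < t.eval 0) {c : ℝ} (hc : 0 < c) :
    ∀ᶠ k in atTop, ∀ x ≤ 0, 0 < t.eval x + c * (1 - x) ^ k := by
  obtain ⟨δ, hδ, hnear⟩ := Metric.eventually_nhds_iff.mp
    (t.continuous.continuousAt.eventually (lt_mem_nhds ht))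
  obtain ⟨C, hC⟩ := t.exists_abs_eval_le_mul_pow
  obtain ⟨j, hj⟩ := pow_unbounded_of_one_lt (C / c) (by linarith : 1 < 1 + δ)
  filter_upwards [eventually_ge_atTop (j + t.natDegree)] with k hk x hx
  have h1x : 0 < 1 - x := by linarith
  by_cases hxδ : -δ < x
  · have : 0 < t.eval x := hnear (by rw [Real.dist_eq, abs_lt]; constructor <;> linarith)
    positivity
  · have hpow : (1 + δ) ^ j * (1 - x) ^ t.natDegree ≤ (1 - x) ^ k :=
      calc (1 + δ) ^ j * (1 - x) ^ t.natDegree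
          ≤ (1 - x) ^ j * (1 - x) ^ t.natDegree := by gcongr; linarith
        _ = (1 - x) ^ (j + t.natDegree) := (pow_add _ _ _).symm
        _ ≤ (1 - x) ^ k := pow_le_pow_right₀ (by linarith) hk
    have hN : 0 < (1 - x) ^ t.natDegree := by positivity
    have hCj : C < c * (1 + δ) ^ j := (div_lt_iff₀' hc).mp hj
    have := (abs_le.mp (hC x)).1
    rw [abs_of_nonpos hx, ← sub_eq_add_neg] at this
    nlinarith

end Polynomial

noncomputable def edgeFactor (m : ℕ) : ℝ[X] := (X - 1) * (2 * X - 1) ^ (2 * m + 1)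

lemma eval_edgeFactor (m : ℕ) (x : ℝ) :
    (edgeFactor m).eval x = (x - 1) * (2 * x - 1) ^ (2 * m + 1) := by
  simp [edgeFactor]

lemma abs_eval_edgeFactor_le (m : ℕ) {x : ℝ} (hx : x ∈ Icc (0:ℝ) 1) :
    |(edgeFactor m).eval x| ≤ 1 - x := by
  have h2x : |2 * x - 1| ≤ 1 := abs_le.mpr ⟨by linarith [hx.1], by linarith [hx.2]⟩
  rw [eval_edgeFactor, abs_mul, abs_pow, abs_of_nonpos (by linarith [hx.2]), neg_sub]
  exact mul_le_of_le_one_right (by linarith [hx.2]) (pow_le_one₀ (abs_nonneg _) h2x)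

lemma one_sub_pow_le_eval_edgeFactor (m : ℕ) {x : ℝ} (hx : x ≤ 0) :
    (1 - x) ^ (2 * m + 2) ≤ (edgeFactor m).eval x := by
  rw [eval_edgeFactor, show (x - 1) * (2 * x - 1) ^ (2 * m + 1)
      = (1 - x) * (1 - 2 * x) ^ (2 * m + 1) by
    rw [show 2 * x - 1 = -(1 - 2 * x) by ring, (odd_two_mul_add_one m).neg_pow]; ring, pow_succ']
  gcongr <;> linarith

lemma X_mul_edgeFactor_comp_one_sub (m : ℕ) :
    (X * edgeFactor m).comp (1 - X) = -(X * edgeFactor m) := by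
  refine Polynomial.funext fun x => ?_
  simp only [eval_comp, eval_neg, eval_mul, eval_sub, eval_one, eval_X, eval_edgeFactor]
  rw [show 2 * (1 - x) - 1 = -(2 * x - 1) by ring, (odd_two_mul_add_one m).neg_pow]
  ring

/-- The conditions of `memP'` at the endpoint `0`; those at `1` are the same conditions
on `1 - p (1 - x)`. -/
def IsLowerAdmissible (p : ℝ[X]) : Prop :=
  (∀ x < 0, p.eval x < 0) ∧ ∀ x ∈ Ioo (0:ℝ) 1, 0 < p.eval x

lemma eventually_isLowerAdmissible_add_X_mul_edgeFactor {q : ℝ[X]} {η : ℝ} (hη : 0 < η)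
    (hq0 : q.eval 0 = 0) (hq : ∀ x ∈ Ioo (0:ℝ) 1, η * x ≤ q.eval x) :
    ∀ᶠ m in atTop, IsLowerAdmissible (q + C η * (X * edgeFactor m)) := by
  set t := q.divX
  have hqt : ∀ x, q.eval x = x * t.eval x := fun x => by
    conv_lhs => rw [← q.divX_mul_X_add, coeff_zero_eq_eval_zero, hq0]
    simp [t, mul_comm]
  have ht : ∀ x ∈ Ioo (0:ℝ) 1, η ≤ t.eval x := fun x hx =>
    le_of_mul_le_mul_left (by linarith [hq x hx, hqt x]) hx.1
  have ht0 : η ≤ t.eval 0 := le_on_closure ht continuousOn_const t.continuous.continuousOn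
    (by rw [closure_Ioo zero_ne_one]; exact left_mem_Icc.mpr zero_le_one)
  have hk : Tendsto (fun m : ℕ => 2 * m + 2) atTop atTop :=
    tendsto_atTop_mono (fun m => by dsimp; omega) tendsto_id
  filter_upwards [hk.eventually (eventually_pos_add_mul_one_sub_pow (by linarith) hη)]
    with m hm
  have hev : ∀ x, (q + C η * (X * edgeFactor m)).eval x
      = x * (t.eval x + η * (edgeFactor m).eval x) := fun x => by
    simp only [eval_add, eval_mul, eval_C, eval_X, hqt]; ring
  refine ⟨fun x hx => ?_, fun x hx => ?_⟩
  · rw [hev]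
    have := one_sub_pow_le_eval_edgeFactor m hx.le
    exact mul_neg_of_neg_of_pos hx (by nlinarith [hm x hx.le])
  · rw [hev]
    have := (abs_le.mp (abs_eval_edgeFactor_le m (Ioo_subset_Icc_self hx))).1
    exact mul_pos hx.1 (by nlinarith [ht x hx, hx.1])

lemma memP'_of_isLowerAdmissible {p : ℝ[X]} (h : IsLowerAdmissible p)
    (h' : IsLowerAdmissible (1 - p.comp (1 - X))) : memP' p := by
  have hev : ∀ x, (1 - p.comp (1 - X)).eval (1 - x) = 1 - p.eval x := fun x => by
    simp [eval_comp]
  refine ⟨fun x hx => ⟨h.2 x hx, ?_⟩, h.1, fun x hx => ?_⟩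
  · have := h'.2 (1 - x) ⟨by linarith [hx.2], by linarith [hx.1]⟩
    rw [hev] at this; linarith
  · have := h'.1 (1 - x) (by linarith)
    rw [hev] at this; linarith

lemma toContinuousMapOn_mem_F1_iff (P : ℝ[X]) :
    P.toContinuousMapOn (Icc (0:ℝ) 1) ∈ F1 ↔
      P.eval 0 = 0 ∧ P.eval 1 = 1 ∧ ∀ x ∈ Icc (0:ℝ) 1, P.eval x ∈ Icc (0:ℝ) 1 := by
  simp [F1]

lemma exists_toContinuousMapOn_eq_bernsteinApproximation (n : ℕ) (f : C(I, ℝ)) :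
    ∃ P : ℝ[X], P.toContinuousMapOn I = bernsteinApproximation n f :=
  ⟨∑ k : Fin (n + 1), bernsteinPolynomial ℝ n k * C (f (bernstein.z k)), by
    ext; simp [bernstein, bernsteinApproximation.apply, eval_finsetSum]⟩

lemma bernsteinApproximation_mem_F1 {f : C(I, ℝ)} (hf : f ∈ F1) {n : ℕ} (hn : n ≠ 0) :
    bernsteinApproximation n f ∈ F1 := by
  obtain ⟨hf0, hf1, hf01⟩ := hf
  refine ⟨(bernsteinApproximation.apply_zero n f).trans hf0,
    (bernsteinApproximation.apply_one hn f).trans hf1, fun x => ⟨?_, ?_⟩⟩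
  · rw [bernsteinApproximation.apply]
    exact Finset.sum_nonneg fun k _ => mul_nonneg bernstein_nonneg (hf01 _).1
  · rw [bernsteinApproximation.apply, ← bernstein.probability n x]
    exact Finset.sum_le_sum fun k _ => mul_le_of_le_one_right bernstein_nonneg (hf01 _).2

lemma exists_polynomial_mem_F1_norm_sub_lt {f : C(I, ℝ)} (hf : f ∈ F1) {ε : ℝ}
    (hε : 0 < ε) :
    ∃ P : ℝ[X], P.toContinuousMapOn I ∈ F1 ∧ ‖P.toContinuousMapOn I - f‖ < ε := by
  obtain ⟨n, hdist, hn⟩ := ((bernsteinApproximation_uniform f).eventually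
    (Metric.ball_mem_nhds f hε)).and (eventually_ne_atTop 0) |>.exists
  obtain ⟨P, hP⟩ := exists_toContinuousMapOn_eq_bernsteinApproximation n f
  exact ⟨P, hP ▸ bernsteinApproximation_mem_F1 hf hn, by rwa [hP, ← dist_eq_norm]⟩

lemma one_sub_comp_one_sub_mem_F1 {P : ℝ[X]} (hP : P.toContinuousMapOn I ∈ F1) :
    (1 - P.comp (1 - X)).toContinuousMapOn I ∈ F1 := by
  obtain ⟨h0, h1, h01⟩ := (toContinuousMapOn_mem_F1_iff P).mp hP
  refine (toContinuousMapOn_mem_F1_iff _).mpr ⟨by simp [eval_comp, h1], by simp [eval_comp, h0],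
    fun x hx => ?_⟩
  have := h01 (1 - x) ⟨by linarith [hx.2], by linarith [hx.1]⟩
  simp only [eval_sub, eval_one, eval_comp, eval_X]
  exact ⟨by linarith [this.2], by linarith [this.1]⟩

noncomputable def approxPoly (η : ℝ) (m : ℕ) (P : ℝ[X]) : ℝ[X] :=
  C (1 - η) * P + C η * X + C η * (X * edgeFactor m)

lemma one_sub_approxPoly_comp_one_sub (η : ℝ) (m : ℕ) (P : ℝ[X]) :
    1 - (approxPoly η m P).comp (1 - X) = approxPoly η m (1 - P.comp (1 - X)) := by
  have h := X_mul_edgeFactor_comp_one_sub m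
  simp only [approxPoly, add_comp, mul_comp, C_comp, X_comp, C_sub, C_1, sub_comp, one_comp]
    at h ⊢
  rw [h]
  ring

lemma eval_mix_X_eq_zero_and_mul_le {P : ℝ[X]} (hP : P.toContinuousMapOn I ∈ F1) {η : ℝ}
    (hη1 : η ≤ 1) :
    (C (1 - η) * P + C η * X).eval 0 = 0 ∧
      ∀ x ∈ Ioo (0:ℝ) 1, η * x ≤ (C (1 - η) * P + C η * X).eval x := by
  obtain ⟨h0, -, h01⟩ := (toContinuousMapOn_mem_F1_iff P).mp hP
  refine ⟨by simp [h0], fun x hx => ?_⟩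
  have := (h01 x (Ioo_subset_Icc_self hx)).1
  simp only [eval_add, eval_mul, eval_C, eval_X]
  nlinarith

lemma abs_eval_approxPoly_sub_le {P : ℝ[X]} {x η : ℝ} (m : ℕ) (hx : x ∈ Icc (0:ℝ) 1)
    (hPx : P.eval x ∈ Icc (0:ℝ) 1) (hη : 0 ≤ η) :
    |(approxPoly η m P).eval x - P.eval x| ≤ 2 * η := by
  have he := abs_eval_edgeFactor_le m hx
  have hxP : |x - P.eval x| ≤ 1 :=
    abs_le.mpr ⟨by linarith [hx.1, hPx.2], by linarith [hx.2, hPx.1]⟩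
  have hxe : |x * (edgeFactor m).eval x| ≤ 1 := by
    rw [abs_mul, abs_of_nonneg hx.1]
    nlinarith [abs_nonneg ((edgeFactor m).eval x), hx.1, hx.2]
  calc |(approxPoly η m P).eval x - P.eval x|
      = |η * (x - P.eval x) + η * (x * (edgeFactor m).eval x)| := by
        simp only [approxPoly, eval_add, eval_mul, eval_C, eval_X]
        congr 1
        ring
    _ ≤ η * 1 + η * 1 := by
        refine (abs_add_le _ _).trans ?_
        rw [abs_mul, abs_mul, abs_of_nonneg hη]
        gcongr
    _ = 2 * η := by ring

lemma exists_memP'_norm_sub_toContinuousMapOn_lt {P : ℝ[X]} (hP : P.toContinuousMapOn I ∈ F1)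
    {ε : ℝ} (hε : 0 < ε) :
    ∃ p : ℝ[X], memP' p ∧ ‖p.toContinuousMapOn I - P.toContinuousMapOn I‖ < ε := by
  set η := min (ε / 3) 1
  have hη : 0 < η := lt_min (by positivity) one_pos
  have hη1 : η ≤ 1 := min_le_right _ _
  have hP' := one_sub_comp_one_sub_mem_F1 hP
  obtain ⟨h0, hlow⟩ := eval_mix_X_eq_zero_and_mul_le hP hη1
  obtain ⟨h0', hlow'⟩ := eval_mix_X_eq_zero_and_mul_le hP' hη1
  obtain ⟨m, hm, hm'⟩ := ((eventually_isLowerAdmissible_add_X_mul_edgeFactor hη h0 hlow).and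
    (eventually_isLowerAdmissible_add_X_mul_edgeFactor hη h0' hlow')).exists
  refine ⟨approxPoly η m P, memP'_of_isLowerAdmissible hm ?_, ?_⟩
  · rwa [one_sub_approxPoly_comp_one_sub]
  · rw [ContinuousMap.norm_lt_iff _ hε]
    intro x
    have hPx := ((toContinuousMapOn_mem_F1_iff P).mp hP).2.2 x x.2
    simpa using (abs_eval_approxPoly_sub_le m x.2 hPx hη.le).trans_lt
      (by linarith [min_le_left (ε / 3) 1] : 2 * η < ε)

lemma eval_zero_of_memP' {p : ℝ[X]} (hp : memP' p) : p.eval 0 = 0 :=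
  le_antisymm
    (le_on_closure (s := Iio 0) (fun x hx => (hp.2.1 x hx).le) p.continuous.continuousOn
      continuousOn_const (by simp [closure_Iio]))
    (le_on_closure (fun x hx => (hp.1 x hx).1.le) continuousOn_const p.continuous.continuousOn
      (by simp [closure_Ioo zero_ne_one]))

lemma eval_one_of_memP' {p : ℝ[X]} (hp : memP' p) : p.eval 1 = 1 :=
  le_antisymm
    (le_on_closure (fun x hx => (hp.1 x hx).2.le) p.continuous.continuousOn continuousOn_const
      (by simp [closure_Ioo zero_ne_one]))
    (le_on_closure (s := Ioi 1) (fun x hx => (hp.2.2 x hx).le) continuousOn_const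
      p.continuous.continuousOn (by simp [closure_Ioi]))

lemma P'G_subset_F1 : P'G ⊆ F1 := by
  rintro _ ⟨p, hp, rfl⟩
  refine (toContinuousMapOn_mem_F1_iff p).mpr
    ⟨eval_zero_of_memP' hp, eval_one_of_memP' hp, fun x hx => ?_⟩
  rcases hx.1.eq_or_lt with rfl | hx0
  · simp [eval_zero_of_memP' hp]
  rcases hx.2.eq_or_lt with rfl | hx1
  · simp [eval_one_of_memP' hp]
  exact Ioo_subset_Icc_self (hp.1 x ⟨hx0, hx1⟩)

lemma isClosed_F1 : IsClosed F1 := by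
  simp only [F1, ofPred_and, ofPred_forall]
  have hev (x : Icc (0:ℝ) 1) : Continuous fun f : C(Icc (0:ℝ) 1, ℝ) => f x :=
    continuous_eval_const x
  exact (isClosed_eq (hev _) continuous_const).inter ((isClosed_eq (hev _) continuous_const).inter
    (isClosed_iInter fun x => isClosed_Icc.preimage (hev x)))

lemma exists_memP'_norm_sub_lt {f : C(I, ℝ)} (hf : f ∈ F1) {ε : ℝ} (hε : 0 < ε) :
    ∃ p : ℝ[X], memP' p ∧ ‖p.toContinuousMapOn I - f‖ < ε := by
  obtain ⟨P, hP, hPf⟩ := exists_polynomial_mem_F1_norm_sub_lt hf (half_pos hε)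
  obtain ⟨p, hp, hpP⟩ := exists_memP'_norm_sub_toContinuousMapOn_lt hP (half_pos hε)
  refine ⟨p, hp, ?_⟩
  calc ‖p.toContinuousMapOn I - f‖
      = ‖(p.toContinuousMapOn I - P.toContinuousMapOn I) + (P.toContinuousMapOn I - f)‖ := by
        rw [sub_add_sub_cancel]
    _ ≤ _ := norm_add_le _ _
    _ < ε / 2 + ε / 2 := add_lt_add hpP hPf
    _ = ε := add_halves ε

theorem stmt_4 :
    (∀ f ∈ F1, ∀ ε : ℝ, 0 < ε →
      ∃ p : Polynomial ℝ, memP' p ∧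
        ‖p.toContinuousMapOn (Set.Icc (0:ℝ) 1) - f‖ < ε) ∧
    closure P'G = F1 := by
  refine ⟨fun f hf ε hε => exists_memP'_norm_sub_lt hf hε,
    (closure_minimal P'G_subset_F1 isClosed_F1).antisymm fun f hf => ?_⟩
  refine Metric.mem_closure_iff.mpr fun ε hε => ?_
  obtain ⟨p, hp, hpf⟩ := exists_memP'_norm_sub_lt hf hε
  exact ⟨_, ⟨p, hp, rfl⟩, by rwa [dist_eq_norm, norm_sub_rev]⟩
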